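/- The minimum of (trace(W₁)+trace(W₂))/2 over all symmetric W₁, W₂ making the block matrix [[W₁, M],[Mᵀ, W₂]] positive semidefinite equals the nuclear norm ‖M‖_*, and the minimum is attained. -/

import Mathlib

open Matrix

/-- The nuclear norm of a real matrix: the sum of its singular values,
computed as the trace of the positive semidefinite square root of `Mᵀ * M`. -/
noncomputable def nuclearNorm {m n : ℕ} (M : Matrix (Fin m) (Fin n) ℝ) : ℝ :=
  (let hA := Matrix.posSemidef_conjTranspose_mul_self M
   hA.isHermitian.eigenvectorUnitary.1 *
     diagonal (fun i => ((hA.isHermitian.eigenvalues i).sqrt : ℝ)) *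
     (star hA.isHermitian.eigenvectorUnitary : Matrix (Fin n) (Fin n) ℝ)).trace

/-! With `V` an orthonormal eigenbasis of `Mᴴ M`, `σ` the square roots of its eigenvalues and
`U = M V diag(σ)⁻¹`, we have `M = U diag(σ) Vᴴ` and `1 - U Uᴴ` is an orthogonal projection.
The choice `W₁ = U diag(σ) Uᴴ`, `W₂ = V diag(σ) Vᴴ` makes the block matrix equal to
`[U; V] diag(σ) [U; V]ᴴ`, with half-trace `∑ σ`. Conversely, conjugating a feasible block matrix by
`[U; -V]` gives `tr(Uᴴ W₁ U) + tr(Vᴴ W₂ V) ≥ 2 tr(Uᴴ M V) = 2 ∑ σ`, while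
`tr(Uᴴ W₁ U) ≤ tr W₁` since `tr(W₁ (1 - U Uᴴ)) ≥ 0` and `tr(Vᴴ W₂ V) = tr W₂`. -/

namespace Matrix

variable {m n k : Type*}

theorem PosSemidef.isSymm {A : Matrix n n ℝ} (hA : A.PosSemidef) : A.IsSymm :=
  (conjTranspose_eq_transpose_of_trivial A).symm.trans hA.isHermitian.eq

theorem PosSemidef.of_fromBlocks₁₁ {A : Matrix m m ℝ} {B : Matrix m n ℝ} {C : Matrix n m ℝ}
    {D : Matrix n n ℝ} (h : (fromBlocks A B C D).PosSemidef) : A.PosSemidef :=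
  h.submatrix Sum.inl

theorem PosSemidef.of_fromBlocks₂₂ {A : Matrix m m ℝ} {B : Matrix m n ℝ} {C : Matrix n m ℝ}
    {D : Matrix n n ℝ} (h : (fromBlocks A B C D).PosSemidef) : D.PosSemidef :=
  h.submatrix Sum.inr

variable [Fintype m] [Fintype n]

theorem PosSemidef.two_mul_trace_le_of_fromBlocks [Fintype k] {A : Matrix m m ℝ}
    {B : Matrix m n ℝ} {D : Matrix n n ℝ} (h : (fromBlocks A B Bᴴ D).PosSemidef)
    (X : Matrix m k ℝ) (Y : Matrix n k ℝ) :
    2 * (Xᴴ * B * Y).trace ≤ (Xᴴ * A * X).trace + (Yᴴ * D * Y).trace := by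
  have hK := (h.conjTranspose_mul_mul_same (fromRows X (-Y))).trace_nonneg
  have hcross : (Yᴴ * Bᴴ * X).trace = (Xᴴ * B * Y).trace := by
    rw [← star_trivial (Xᴴ * B * Y).trace, ← trace_conjTranspose]
    simp only [conjTranspose_mul, conjTranspose_conjTranspose, Matrix.mul_assoc]
  rw [conjTranspose_fromRows_eq_fromCols_conjTranspose, conjTranspose_neg,
    fromCols_mul_fromBlocks, fromCols_mul_fromRows] at hK
  simp only [Matrix.neg_mul, Matrix.mul_neg, trace_add, trace_neg, Matrix.add_mul] at hK
  linarith

open scoped ComplexOrder in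
theorem PosSemidef.trace_conjTranspose_mul_mul_le {𝕜 : Type*} [RCLike 𝕜]
    {W : Matrix m m 𝕜} (hW : W.PosSemidef) {U : Matrix m n 𝕜} (hU : U * Uᴴ * U = U) :
    (Uᴴ * W * U).trace ≤ W.trace := by
  classical
  set P := 1 - U * Uᴴ
  have hPP : P * P = P := by
    rw [Matrix.sub_mul, Matrix.mul_sub, Matrix.mul_sub, Matrix.one_mul, Matrix.mul_one,
      Matrix.one_mul, ← Matrix.mul_assoc (U * Uᴴ) U Uᴴ, hU, sub_self, sub_zero]
  have hP : Pᴴ = P := by simp [P]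
  have htrace : (Pᴴ * W * P).trace = W.trace - (Uᴴ * W * U).trace := by
    rw [hP, Matrix.mul_assoc, trace_mul_comm, Matrix.mul_assoc, hPP, Matrix.mul_sub, trace_sub,
      Matrix.mul_one, ← Matrix.mul_assoc, trace_mul_comm, ← Matrix.mul_assoc]
  exact sub_nonneg.mp (htrace ▸ (hW.conjTranspose_mul_mul_same P).trace_nonneg)

theorem mul_diagonal_inv_mul_eq_self [DecidableEq n] {B : Matrix m n ℝ} {σ : n → ℝ}
    (hB : Bᴴ * B = diagonal (σ ^ 2)) : B * diagonal (σ⁻¹ * σ) = B := by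
  -- `B - B * diagonal (σ⁻¹ * σ)` keeps the columns with `σ i = 0`, whose squared norm is `σ i ^ 2`
  have hgram : (B - B * diagonal (σ⁻¹ * σ))ᴴ * (B - B * diagonal (σ⁻¹ * σ)) = 0 := by
    rw [← Matrix.mul_one B, Matrix.mul_assoc, ← Matrix.mul_sub, Matrix.one_mul, ← diagonal_one,
      diagonal_sub, conjTranspose_mul, Matrix.mul_assoc, ← Matrix.mul_assoc Bᴴ, hB,
      diagonal_conjTranspose, diagonal_mul_diagonal, diagonal_mul_diagonal, ← diagonal_zero]
    congr 1
    funext i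
    rcases eq_or_ne (σ i) 0 with h | h <;> simp [h]
  exact (sub_eq_zero.mp (conjTranspose_mul_self_eq_zero.mp hgram)).symm

section SingularValueDecomposition

variable [DecidableEq n] (M : Matrix m n ℝ)

/- The right singular vectors are the orthonormal eigenbasis of `Mᴴ * M` chosen by
`IsHermitian.eigenvectorUnitary`, so the singular values are not sorted (unlike
`LinearMap.singularValues`). Since `0⁻¹ = 0`, the left singular vectors belonging to zero singular
values are `0`, and `leftSingularVectors M` is only a partial isometry. -/
noncomputable def singularValues (i : n) : ℝ :=
  √((posSemidef_conjTranspose_mul_self M).isHermitian.eigenvalues i)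

noncomputable def rightSingularVectors : Matrix n n ℝ :=
  (posSemidef_conjTranspose_mul_self M).isHermitian.eigenvectorUnitary

noncomputable def leftSingularVectors : Matrix m n ℝ :=
  M * rightSingularVectors M * diagonal (singularValues M)⁻¹

theorem singularValues_nonneg : 0 ≤ singularValues M := fun _ => Real.sqrt_nonneg _

theorem rightSingularVectors_conjTranspose_mul_self :
    (rightSingularVectors M)ᴴ * rightSingularVectors M = 1 :=
  Unitary.coe_star_mul_self (posSemidef_conjTranspose_mul_self M).isHermitian.eigenvectorUnitary

theorem rightSingularVectors_mul_conjTranspose_self :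
    rightSingularVectors M * (rightSingularVectors M)ᴴ = 1 :=
  Unitary.coe_mul_star_self (posSemidef_conjTranspose_mul_self M).isHermitian.eigenvectorUnitary

theorem conjTranspose_mul_self_mul_rightSingularVectors :
    (M * rightSingularVectors M)ᴴ * (M * rightSingularVectors M) =
      diagonal (singularValues M ^ 2) := by
  have hA := posSemidef_conjTranspose_mul_self M
  have h := hA.isHermitian.conjStarAlgAut_star_eigenvectorUnitary
  rw [Unitary.conjStarAlgAut_star_apply, RCLike.ofReal_real_eq_id, Function.id_comp] at h
  rw [conjTranspose_mul, Matrix.mul_assoc, ← Matrix.mul_assoc Mᴴ, ← Matrix.mul_assoc]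
  exact h.trans (congrArg diagonal (funext fun i => (Real.sq_sqrt (hA.eigenvalues_nonneg i)).symm))

theorem leftSingularVectors_mul_diagonal :
    leftSingularVectors M * diagonal (singularValues M) = M * rightSingularVectors M := by
  rw [leftSingularVectors, Matrix.mul_assoc, diagonal_mul_diagonal]
  exact mul_diagonal_inv_mul_eq_self (conjTranspose_mul_self_mul_rightSingularVectors M)

theorem leftSingularVectors_mul_diagonal_mul_conjTranspose :
    leftSingularVectors M * diagonal (singularValues M) * (rightSingularVectors M)ᴴ = M := by
  rw [leftSingularVectors_mul_diagonal, Matrix.mul_assoc,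
    rightSingularVectors_mul_conjTranspose_self, Matrix.mul_one]

theorem conjTranspose_leftSingularVectors_mul_self :
    (leftSingularVectors M)ᴴ * leftSingularVectors M =
      diagonal ((singularValues M)⁻¹ * singularValues M) := by
  rw [leftSingularVectors, conjTranspose_mul, diagonal_conjTranspose, star_trivial,
    Matrix.mul_assoc, ← Matrix.mul_assoc (M * rightSingularVectors M)ᴴ,
    conjTranspose_mul_self_mul_rightSingularVectors, diagonal_mul_diagonal, diagonal_mul_diagonal]
  congr 1
  funext i
  simp only [Pi.inv_apply, Pi.mul_apply, Pi.pow_apply]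
  rcases eq_or_ne (singularValues M i) 0 with h | h
  · simp [h]
  · field_simp

theorem leftSingularVectors_mul_conjTranspose_mul_self :
    leftSingularVectors M * (leftSingularVectors M)ᴴ * leftSingularVectors M =
      leftSingularVectors M := by
  rw [Matrix.mul_assoc, conjTranspose_leftSingularVectors_mul_self, leftSingularVectors,
    Matrix.mul_assoc, diagonal_mul_diagonal]
  congr 2
  funext i
  rcases eq_or_ne (singularValues M i) 0 with h | h <;> simp [h]

theorem conjTranspose_leftSingularVectors_mul_mul_rightSingularVectors :
    (leftSingularVectors M)ᴴ * M * rightSingularVectors M = diagonal (singularValues M) := by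
  rw [Matrix.mul_assoc, ← leftSingularVectors_mul_diagonal, ← Matrix.mul_assoc,
    conjTranspose_leftSingularVectors_mul_self, diagonal_mul_diagonal]
  exact congrArg diagonal (funext fun i => inv_mul_mul_self _)

theorem trace_leftSingularVectors_conj :
    (leftSingularVectors M * diagonal (singularValues M) * (leftSingularVectors M)ᴴ).trace =
      ∑ i, singularValues M i := by
  rw [trace_mul_comm, ← Matrix.mul_assoc, conjTranspose_leftSingularVectors_mul_self,
    diagonal_mul_diagonal, trace_diagonal]
  exact Finset.sum_congr rfl fun i _ => inv_mul_mul_self _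

theorem trace_rightSingularVectors_conj :
    (rightSingularVectors M * diagonal (singularValues M) * (rightSingularVectors M)ᴴ).trace =
      ∑ i, singularValues M i := by
  rw [trace_mul_comm, ← Matrix.mul_assoc, rightSingularVectors_conjTranspose_mul_self,
    Matrix.one_mul, trace_diagonal]

theorem posSemidef_fromBlocks_singularVectors :
    (fromBlocks
      (leftSingularVectors M * diagonal (singularValues M) * (leftSingularVectors M)ᴴ) M Mᴴ
      (rightSingularVectors M * diagonal (singularValues M) * (rightSingularVectors M)ᴴ)
      ).PosSemidef := by
  have h := (PosSemidef.diagonal (singularValues_nonneg M)).mul_mul_conjTranspose_same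
    (fromRows (leftSingularVectors M) (rightSingularVectors M))
  convert h using 1
  rw [conjTranspose_fromRows_eq_fromCols_conjTranspose, fromRows_mul, fromRows_mul_fromCols]
  congr 1
  · exact (leftSingularVectors_mul_diagonal_mul_conjTranspose M).symm
  · conv_lhs => rw [← leftSingularVectors_mul_diagonal_mul_conjTranspose M]
    simp only [conjTranspose_mul, conjTranspose_conjTranspose, diagonal_conjTranspose,
      star_trivial, Matrix.mul_assoc]

theorem two_mul_sum_singularValues_le {W₁ : Matrix m m ℝ} {W₂ : Matrix n n ℝ}
    (h : (fromBlocks W₁ M Mᴴ W₂).PosSemidef) :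
    2 * ∑ i, singularValues M i ≤ W₁.trace + W₂.trace := by
  have hcross := h.two_mul_trace_le_of_fromBlocks (leftSingularVectors M) (rightSingularVectors M)
  have hW₁ := h.of_fromBlocks₁₁.trace_conjTranspose_mul_mul_le
    (leftSingularVectors_mul_conjTranspose_mul_self M)
  have hW₂ : ((rightSingularVectors M)ᴴ * W₂ * rightSingularVectors M).trace = W₂.trace := by
    rw [trace_mul_comm, ← Matrix.mul_assoc, rightSingularVectors_mul_conjTranspose_self,
      Matrix.one_mul]
  rw [conjTranspose_leftSingularVectors_mul_mul_rightSingularVectors, trace_diagonal, hW₂]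
    at hcross
  linarith

end SingularValueDecomposition

end Matrix

theorem nuclearNorm_eq_sum_singularValues {m n : ℕ} (M : Matrix (Fin m) (Fin n) ℝ) :
    nuclearNorm M = ∑ i, singularValues M i :=
  trace_rightSingularVectors_conj M

theorem nuclearNorm_eq_min_half_trace (m n : ℕ) (M : Matrix (Fin m) (Fin n) ℝ) :
    IsLeast
      {t : ℝ | ∃ (W₁ : Matrix (Fin m) (Fin m) ℝ) (W₂ : Matrix (Fin n) (Fin n) ℝ),
        W₁.IsSymm ∧ W₂.IsSymm ∧ (fromBlocks W₁ M Mᵀ W₂).PosSemidef ∧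
        t = (W₁.trace + W₂.trace) / 2}
      (nuclearNorm M) := by
  rw [← conjTranspose_eq_transpose_of_trivial, nuclearNorm_eq_sum_singularValues]
  have hblocks := posSemidef_fromBlocks_singularVectors M
  refine ⟨⟨_, _, hblocks.of_fromBlocks₁₁.isSymm, hblocks.of_fromBlocks₂₂.isSymm, hblocks, ?_⟩, ?_⟩
  · rw [trace_leftSingularVectors_conj, trace_rightSingularVectors_conj]
    ring
  · rintro t ⟨W₁, W₂, -, -, hW, rfl⟩
    linarith [two_mul_sum_singularValues_le M hW]
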